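/- arXiv:2405.08432 — 2 statements merged into one kernel-verified Lean document; each statement's English description precedes it below -/
import Mathlib

section
/- Let X be a finite poset with Alexandroff topology and k a field. Every injective object J in the category of sheaves of k-vector spaces on X decomposes as a direct sum J ≅ ⊕_{x∈X} J(x) ⊗_k k_{C_x}, where J(x) = Hom(k_{{x}}, J) and k_{C_x} is the constant sheaf k supported on the closure C_x = {y : y ≤ x}. -/
/-- A sheaf of `k`-modules on a finite poset `X` (with its Alexandroff topology), given by
its stalks and the transition (restriction-to-smaller-open / generization) maps. -/
structure PSheaf (X : Type) [Preorder X] (k : Type) [CommRing k] where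
  stalk : X → Type
  [acg : ∀ x, AddCommGroup (stalk x)]
  [mod : ∀ x, Module k (stalk x)]
  res : ∀ {x y : X}, x ≤ y → (stalk x →ₗ[k] stalk y)
  res_refl : ∀ x : X, res (le_refl x) = LinearMap.id
  res_comp : ∀ {x y z : X} (hxy : x ≤ y) (hyz : y ≤ z),
    (res hyz).comp (res hxy) = res (hxy.trans hyz)

attribute [instance] PSheaf.acg PSheaf.mod

/-- A morphism of sheaves on a finite poset: componentwise linear maps commuting with the
transition maps. -/
structure PHom {X : Type} [Preorder X] {k : Type} [CommRing k] (F G : PSheaf X k) where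
  app : ∀ x, F.stalk x →ₗ[k] G.stalk x
  natural : ∀ {x y : X} (h : x ≤ y), (G.res h).comp (app x) = (app y).comp (F.res h)

/-- `J` is an injective object of the category of sheaves of `k`-modules on `X`: every
morphism to `J` extends along every monomorphism (= stalkwise injective morphism). -/
def IsInjectiveSheaf {X : Type} [Preorder X] {k : Type} [CommRing k] (J : PSheaf X k) :
    Prop :=
  ∀ (F G : PSheaf X k) (ι : PHom F G), (∀ x, Function.Injective (ι.app x)) →
    ∀ f : PHom F J, ∃ g : PHom G J, ∀ x, (g.app x).comp (ι.app x) = f.app x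

/-- `J(x) = Hom(k_{{x}}, J)`: the sections of the stalk `J_x` supported at `x`, i.e. killed
by every transition map to a strictly larger point. -/
def suppSec {X : Type} [Preorder X] {k : Type} [CommRing k] (J : PSheaf X k) (x : X) :
    Submodule k (J.stalk x) where
  carrier := {v | ∀ (y : X) (h : x < y), J.res h.le v = 0}
  add_mem' := by
    intro a b ha hb y h
    rw [map_add, ha y h, hb y h, add_zero]
  zero_mem' := by
    intro y h
    rw [map_zero]
  smul_mem' := by
    intro c a ha y h
    rw [map_smul, ha y h, smul_zero]

/-!
Fix linear projections `J_x → J(x)` and let `φ_y : J_y → ∏_{x ≥ y} J(x)` send `v` to the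
projections of its images in the `J_x`; these maps are natural in `y`. We show that `φ_y` is
bijective by descending induction on `y`. If `φ_y v = 0`, then by induction `v` dies in every
`J_z` with `z > y`, so `v ∈ J(y)` and `v` is its own projection, which is `0`. For surjectivity,
the induction hypothesis gives a compatible family of sections on the open star `{z > y}`;
injectivity of `J`, applied to the inclusion `k_{z > y} ↪ k_{z ≥ y}`, extends it to some
`v₀ ∈ J_y`, and correcting `v₀` by an element of `J(y)` fixes the component at `y`.
-/

namespace PSheaf

section ConstOn

variable {X : Type} [Preorder X] (k : Type) [CommRing k]

open Classical in
/-- The stalk of `k_U` at `z`, realised inside `k` so that the transition maps are inclusions. -/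
noncomputable def constOnStalk (U : UpperSet X) (z : X) : Submodule k k :=
  if z ∈ U then ⊤ else ⊥

variable {k}

theorem mem_constOnStalk {U : UpperSet X} {z : X} (hz : z ∈ U) (c : k) :
    c ∈ constOnStalk k U z := by
  simp [constOnStalk, hz]

theorem eq_zero_of_mem_constOnStalk {U : UpperSet X} {z : X} (hz : z ∉ U) {c : k}
    (hc : c ∈ constOnStalk k U z) : c = 0 := by
  simpa [constOnStalk, hz] using hc

theorem constOnStalk_mono {U V : UpperSet X} (hUV : (U : Set X) ⊆ V) {z z' : X}
    (h : z ≤ z') : constOnStalk k U z ≤ constOnStalk k V z' := by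
  by_cases hz : z ∈ U
  · intro c _
    exact mem_constOnStalk (V.upper h (hUV hz)) c
  · simp [constOnStalk, hz]

variable (k)

noncomputable def constOn (U : UpperSet X) : PSheaf X k where
  stalk z := constOnStalk k U z
  res h := Submodule.inclusion (constOnStalk_mono subset_rfl h)
  res_refl _ := rfl
  res_comp _ _ := rfl

variable {k}

noncomputable def constOnInclusion {U V : UpperSet X} (hUV : (U : Set X) ⊆ V) :
    PHom (constOn k U) (constOn k V) where
  app z := Submodule.inclusion (constOnStalk_mono hUV (le_refl z))
  natural _ := rfl

theorem constOnInclusion_injective {U V : UpperSet X} (hUV : (U : Set X) ⊆ V) (z : X) :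
    Function.Injective ((constOnInclusion (k := k) hUV).app z) :=
  Submodule.inclusion_injective (constOnStalk_mono hUV le_rfl)

noncomputable def constOnLift (J : PSheaf X k) (U : UpperSet X) (u : ∀ z, J.stalk z)
    (hu : ∀ {z z' : X} (h : z ≤ z'), z ∈ U → J.res h (u z) = u z') :
    PHom (constOn k U) J where
  app z := (LinearMap.toSpanSingleton k _ (u z)).comp (constOnStalk k U z).subtype
  natural {z z'} h := by
    ext ⟨c, hc⟩
    change J.res h (c • u z) = c • u z'
    by_cases hz : z ∈ U
    · rw [map_smul, hu h hz]
    · simp [eq_zero_of_mem_constOnStalk hz hc]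

theorem _root_.IsInjectiveSheaf.exists_res_eq {J : PSheaf X k} (hJ : IsInjectiveSheaf J) (y : X)
    (u : ∀ z, J.stalk z)
    (hu : ∀ {z z' : X} (h : z ≤ z'), y < z → J.res h (u z) = u z') :
    ∃ v : J.stalk y, ∀ z (hz : y < z), J.res hz.le v = u z := by
  have hIoi : ((UpperSet.Ioi y : UpperSet X) : Set X) ⊆ UpperSet.Ici y :=
    Set.Ioi_subset_Ici_self
  obtain ⟨g, hg⟩ := hJ _ _ (constOnInclusion (k := k) hIoi) (constOnInclusion_injective hIoi)
    (constOnLift J (UpperSet.Ioi y) u hu)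
  refine ⟨g.app y ⟨1, mem_constOnStalk (UpperSet.mem_Ici_iff.2 le_rfl) 1⟩, fun z hz => ?_⟩
  calc J.res hz.le (g.app y ⟨1, _⟩)
      = g.app z ((constOnInclusion hIoi).app z ⟨1, mem_constOnStalk hz 1⟩) :=
        LinearMap.congr_fun (g.natural hz.le) _
    _ = (1 : k) • u z := LinearMap.congr_fun (hg z) _
    _ = u z := one_smul k (u z)

end ConstOn

section Decomposition

variable {X : Type} [Preorder X] {k : Type} [Field k] (J : PSheaf X k)

noncomputable def suppSecProj (x : X) : J.stalk x →ₗ[k] suppSec J x :=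
  Classical.choose ((suppSec J x).subtype.exists_leftInverse_of_injective
    (Submodule.ker_subtype _))

@[simp]
theorem suppSecProj_coe (x : X) (v : suppSec J x) : J.suppSecProj x (v : J.stalk x) = v :=
  LinearMap.congr_fun (Classical.choose_spec ((suppSec J x).subtype.exists_leftInverse_of_injective
    (Submodule.ker_subtype _))) v

noncomputable def decomp (y : X) : J.stalk y →ₗ[k] ∀ x : {x : X // y ≤ x}, suppSec J x.1 :=
  LinearMap.pi fun x => (J.suppSecProj x.1).comp (J.res x.2)

theorem decomp_apply (y : X) (v : J.stalk y) (x : {x : X // y ≤ x}) :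
    J.decomp y v x = J.suppSecProj x.1 (J.res x.2 v) := rfl

theorem decomp_apply_self (y : X) (v : J.stalk y) :
    J.decomp y v ⟨y, le_rfl⟩ = J.suppSecProj y v := by
  rw [decomp_apply, J.res_refl]
  rfl

theorem decomp_res {y y' : X} (h : y ≤ y') (v : J.stalk y) (x : {x : X // y' ≤ x}) :
    J.decomp y' (J.res h v) x = J.decomp y v ⟨x.1, h.trans x.2⟩ := by
  rw [decomp_apply, decomp_apply, ← LinearMap.comp_apply (J.res x.2), J.res_comp]

theorem decomp_injective_of_forall_lt (y : X)
    (ih : ∀ z, y < z → Function.Injective (J.decomp z)) :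
    Function.Injective (J.decomp y) := by
  rw [injective_iff_map_eq_zero]
  intro v hv
  have hsupp : v ∈ suppSec J y := fun z hz =>
    (injective_iff_map_eq_zero _).1 (ih z hz) _ <| funext fun x => by
      rw [decomp_res]
      exact congrFun hv _
  have hproj : J.suppSecProj y v = 0 := by
    rw [← decomp_apply_self, hv]
    rfl
  exact congrArg Subtype.val ((J.suppSecProj_coe y ⟨v, hsupp⟩).symm.trans hproj)

end Decomposition

theorem decomp_surjective_of_forall_lt {X : Type} [PartialOrder X] {k : Type} [Field k]
    {J : PSheaf X k} (hJ : IsInjectiveSheaf J) (y : X)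
    (ih : ∀ z, y < z → Function.Bijective (J.decomp z)) :
    Function.Surjective (J.decomp y) := by
  intro w
  have hlift : ∀ z, ∃ v : J.stalk z, ∀ (hz : y < z) (x : {x : X // z ≤ x}),
      J.decomp z v x = w ⟨x.1, hz.le.trans x.2⟩ := fun z => by
    by_cases hz : y < z
    · obtain ⟨v, hv⟩ := (ih z hz).2 fun x => w ⟨x.1, hz.le.trans x.2⟩
      exact ⟨v, fun _ => congrFun hv⟩
    · exact ⟨0, fun h => absurd h hz⟩
  choose u hu using hlift
  have hcompat {z z' : X} (h : z ≤ z') (hz : y < z) : J.res h (u z) = u z' :=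
    (ih z' (hz.trans_le h)).1 <| funext fun x => by
      rw [decomp_res, hu z hz, hu z' (hz.trans_le h)]
  obtain ⟨v₀, hv₀⟩ := hJ.exists_res_eq y u hcompat
  let d : suppSec J y := w ⟨y, le_rfl⟩ - J.suppSecProj y v₀
  refine ⟨v₀ + d, funext fun ⟨x, hx⟩ => ?_⟩
  rcases hx.eq_or_lt with rfl | hlt
  · rw [decomp_apply_self, map_add, suppSecProj_coe]
    exact add_sub_cancel _ _
  · rw [decomp_apply, map_add, d.2 x hlt, add_zero, hv₀ x hlt, ← decomp_apply_self, hu x hlt]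

theorem decomp_bijective {X : Type} [PartialOrder X] [Finite X] {k : Type} [Field k]
    {J : PSheaf X k} (hJ : IsInjectiveSheaf J) (y : X) : Function.Bijective (J.decomp y) := by
  induction y using WellFoundedGT.induction with
  | _ y ih =>
    exact ⟨J.decomp_injective_of_forall_lt y fun z hz => (ih z hz).1,
      decomp_surjective_of_forall_lt hJ y ih⟩

end PSheaf

/-- Every injective sheaf `J` of `k`-vector spaces on a finite poset `X` decomposes as
`J ≅ ⊕_{x ∈ X} J(x) ⊗_k k_{C_x}`, where `J(x) = Hom(k_{{x}}, J)` and `k_{C_x}` is the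
constant sheaf on the closure `C_x = {y : y ≤ x}`: stalkwise, `J_y ≅ ⊕_{x ≥ y} J(x)`,
compatibly with the transition maps (which on the right hand side are the canonical
projections). -/
theorem injective_sheaf_decomposition {X : Type} [PartialOrder X] [Finite X]
    {k : Type} [Field k] (J : PSheaf X k) (hJ : IsInjectiveSheaf J) :
    ∃ φ : ∀ y : X, J.stalk y ≃ₗ[k] (∀ x : {x : X // y ≤ x}, suppSec J x.1),
      ∀ (y y' : X) (h : y ≤ y') (v : J.stalk y) (x : {x : X // y' ≤ x}),
        φ y' (J.res h v) x = φ y v ⟨x.1, h.trans x.2⟩ :=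
  ⟨fun y => LinearEquiv.ofBijective (J.decomp y) (PSheaf.decomp_bijective hJ y),
    fun _ _ h v x => J.decomp_res h v x⟩
end

section
/- Let X be a finite poset, k a field, x_0 ∈ X a closed point (minimal element), U = X \ {x_0}, and J an injective sheaf of k-vector spaces on X. Then the short exact sequence 0 → J(x_0) ⊗_k k_{{x_0}} → J → j_* (J|_U) → 0 splits, where J(x_0) = Hom(k_{{x_0}}, J) and j: U ↪ X is the open inclusion. -/
/-!
Since `x₀` is minimal, no transition map enters `J_{x₀}` from another point, and the sections in
`J(x₀)` are killed by every transition map leaving `x₀`. Hence any linear projection of the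
vector space `J_{x₀}` onto `J(x₀)`, extended by zero to the other stalks, is an endomorphism of
sheaves, and it splits the inclusion `J(x₀) ⊗ k_{{x₀}} → J`.
-/

theorem Submodule.exists_isProj {K V : Type*} [DivisionRing K] [AddCommGroup V] [Module K V]
    (p : Submodule K V) : ∃ f : V →ₗ[K] V, LinearMap.IsProj p f := by
  obtain ⟨q, hq⟩ := p.exists_isCompl
  exact ⟨p.projection q hq,
    ⟨p.projection_apply_mem hq, fun _ hx => p.projection_apply_of_mem_left hq hx⟩⟩

namespace PSheaf

variable {X : Type} [Preorder X] {k : Type} [CommRing k]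

theorem res_self (F : PSheaf X k) {x : X} (h : x ≤ x) : F.res h = LinearMap.id :=
  F.res_refl x

end PSheaf

namespace PHom

variable {X : Type} [Preorder X] {k : Type} [CommRing k] {F G : PSheaf X k} {x₀ : X}

open Classical in
noncomputable def single (hx₀ : ∀ y : X, y ≤ x₀ → y = x₀) (f : F.stalk x₀ →ₗ[k] G.stalk x₀)
    (hf : ∀ v, f v ∈ suppSec G x₀) : PHom F G where
  app := Pi.single x₀ f
  natural {x y} h := by
    rcases eq_or_ne x x₀ with rfl | hx
    · rcases eq_or_ne y x with rfl | hy
      · simp [F.res_self, G.res_self]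
      · have hlt : x < y := lt_of_le_not_ge h fun hyx => hy (hx₀ y hyx)
        ext v
        simp [Pi.single_eq_of_ne hy, hf v y hlt]
    · have hy : y ≠ x₀ := fun hy => hx (hx₀ x (hy ▸ h))
      simp [Pi.single_eq_of_ne hx, Pi.single_eq_of_ne hy]

variable (hx₀ : ∀ y : X, y ≤ x₀ → y = x₀) (f : F.stalk x₀ →ₗ[k] G.stalk x₀)
  (hf : ∀ v, f v ∈ suppSec G x₀)

theorem single_app_self : (single hx₀ f hf).app x₀ = f := by
  simp [single]

theorem single_app_of_ne {x : X} (hx : x ≠ x₀) : (single hx₀ f hf).app x = 0 := by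
  simp [single, hx]

end PHom

theorem injective_sheaf_skyscraper_splits_general {X : Type} [PartialOrder X]
    {k : Type} [Field k] (J : PSheaf X k)
    (x₀ : X) (hx₀ : ∀ y : X, y ≤ x₀ → y = x₀) :
    ∃ e : PHom J J,
      (∀ x : X, x ≠ x₀ → e.app x = 0) ∧
      (∀ v : J.stalk x₀, e.app x₀ v ∈ suppSec J x₀) ∧
      (∀ v ∈ suppSec J x₀, e.app x₀ v = v) := by
  obtain ⟨P, hP⟩ := (suppSec J x₀).exists_isProj
  refine ⟨PHom.single hx₀ P hP.map_mem, fun x hx => PHom.single_app_of_ne hx₀ P _ hx, ?_, ?_⟩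
  · simpa only [PHom.single_app_self] using hP.map_mem
  · simpa only [PHom.single_app_self] using hP.map_id

/-- Let `X` be a finite poset, `x₀` a closed point (minimal element), `U = X \ {x₀}`, and `J`
an injective sheaf of `k`-vector spaces on `X`. The exact sequence
`0 → J(x₀) ⊗ k_{{x₀}} → J → j_*(J|_U) → 0` splits: equivalently, there is an idempotent
endomorphism of `J` which is a projection onto the subsheaf `J(x₀) ⊗ k_{{x₀}}`
(the subsheaf with stalk `J(x₀) = Hom(k_{{x₀}}, J)` at `x₀` and `0` elsewhere). -/
theorem injective_sheaf_skyscraper_splits {X : Type} [PartialOrder X] [Finite X]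
    {k : Type} [Field k] (J : PSheaf X k) (hJ : IsInjectiveSheaf J)
    (x₀ : X) (hx₀ : ∀ y : X, y ≤ x₀ → y = x₀) :
    ∃ e : PHom J J,
      (∀ x : X, x ≠ x₀ → e.app x = 0) ∧
      (∀ v : J.stalk x₀, e.app x₀ v ∈ suppSec J x₀) ∧
      (∀ v ∈ suppSec J x₀, e.app x₀ v = v) :=
  injective_sheaf_skyscraper_splits_general J x₀ hx₀
end
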